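/- Existence of a tiling at level 1: let τ = (Q, 𝒜) be a tile-set whose set of tilings 𝒯_τ is countable and infinite; then there exists a tiling c ∈ 𝒯_τ such that c is not periodic but every configuration y with y ≺ c is periodic. -/

import Mathlib

open Set

/-- A configuration assigns a state to each cell of the plane. -/
abbrev Config (Q : Type*) : Type _ := (ℤ × ℤ) → Q

/-- The shift by a vector `v`: `σ_v c = fun x => c (x + v)`. -/
def shiftC {Q : Type*} (v : ℤ × ℤ) (c : Config Q) : Config Q := fun x => c (x + v)

/-- The pattern `P` with (finite) domain `V` appears in `c` at translate `t`. -/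
def AppearsAt {Q : Type*} (c : Config Q) (V : Finset (ℤ × ℤ)) (P : (ℤ × ℤ) → Q)
    (t : ℤ × ℤ) : Prop :=
  ∀ x ∈ V, c (x + t) = P x

/-- The pattern `P` with (finite) domain `V` appears in `c`. -/
def Appears {Q : Type*} (c : Config Q) (V : Finset (ℤ × ℤ)) (P : (ℤ × ℤ) → Q) : Prop :=
  ∃ t : ℤ × ℤ, AppearsAt c V P t

/-- The pattern preorder: `x ≼ y` iff every pattern appearing in `x` appears in `y`. -/
def PatLe {Q : Type*} (x y : Config Q) : Prop :=
  ∀ (V : Finset (ℤ × ℤ)) (P : (ℤ × ℤ) → Q), Appears x V P → Appears y V P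

/-- A set of configurations is shift-invariant. -/
def ShiftInvariant {Q : Type*} (S : Set (Config Q)) : Prop :=
  ∀ c ∈ S, ∀ v : ℤ × ℤ, shiftC v c ∈ S

/-- `c` is an isolated point of `S` (in the subspace topology). -/
def IsolatedIn {Q : Type*} [TopologicalSpace Q] (S : Set (Config Q)) (c : Config Q) : Prop :=
  ∃ U : Set (Config Q), IsOpen U ∧ U ∩ S = {c}

/-- The topological derivative: the non-isolated points of `S`. -/
def derivSet {Q : Type*} [TopologicalSpace Q] (S : Set (Config Q)) : Set (Config Q) :=
  {c ∈ S | ¬ IsolatedIn S c}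

/-- Transfinite iteration of the topological derivative (Cantor–Bendixson). -/
noncomputable def CBIter {Q : Type*} [TopologicalSpace Q] (S : Set (Config Q))
    (o : Ordinal) : Set (Config Q) :=
  Ordinal.limitRecOn o S (fun _ ih => derivSet ih)
    (fun o _ ih => ⋂ (β : {β : Ordinal // β < o}), ih β.1 β.2)

/-- The Cantor–Bendixson rank of `c` in `S`: least `λ` with `c ∉ S^{(λ)}`. -/
noncomputable def CBRank {Q : Type*} [TopologicalSpace Q] (S : Set (Config Q))
    (c : Config Q) : Ordinal :=
  sInf {l : Ordinal | c ∉ CBIter S l}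

/-- A configuration is periodic iff its shift orbit is finite (equivalently, its
stabilizer has finite index in `ℤ²`). -/
def IsPeriodic {Q : Type*} (c : Config Q) : Prop :=
  (Set.range fun v : ℤ × ℤ => shiftC v c).Finite

/-- `c` is a tiling for the tile-set with domain `V` and allowed patterns `A`. -/
def IsTiling {Q : Type*} (V : Finset (ℤ × ℤ)) (A : Set ({x // x ∈ V} → Q))
    (c : Config Q) : Prop :=
  ∀ t : ℤ × ℤ, (fun y : {x // x ∈ V} => c (t + y.1)) ∈ A

/-- The set of tilings of a tile-set. -/
def Tilings {Q : Type*} (V : Finset (ℤ × ℤ)) (A : Set ({x // x ∈ V} → Q)) :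
    Set (Config Q) :=
  {c | IsTiling V A c}

/-!
Zorn's lemma gives a minimal infinite subshift `G` of the tilings, which is countable. By Baire,
a nonempty countable compact set has an isolated point, so the set `G'` of non-isolated points of
`G` is a proper subshift of `G`, hence finite by minimality, and all of its points share a period
`q`. A configuration `y ≺ c` with `c ∈ G` lies in the orbit closure of `c` but not in the orbit,
so `y ∈ G'` and `y` is periodic. Finally `G` cannot consist of periodic points only: the points
of `G` whose values at `(q, 0)` and `(0, q)` differ from the one at the origin form a compact set
avoiding `G'`, hence a finite one, and then `G` would be covered by finitely many finite orbits
and the finitely many `q`-periodic configurations.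
-/

section Shift

variable {Q : Type*}

@[simp]
lemma shiftC_apply (v x : ℤ × ℤ) (c : Config Q) : shiftC v c x = c (x + v) := rfl

lemma shiftC_shiftC (v w : ℤ × ℤ) (c : Config Q) :
    shiftC w (shiftC v c) = shiftC (v + w) c := by
  ext x
  simp only [shiftC_apply]
  congr 1
  abel

@[simp]
lemma shiftC_zero (c : Config Q) : shiftC 0 c = c := by
  ext x
  simp

lemma shiftC_neg_shiftC (v : ℤ × ℤ) (c : Config Q) : shiftC (-v) (shiftC v c) = c := by
  rw [shiftC_shiftC, add_neg_cancel, shiftC_zero]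

lemma shiftC_injective (v : ℤ × ℤ) : Function.Injective (shiftC (Q := Q) v) :=
  Function.LeftInverse.injective (shiftC_neg_shiftC v)

lemma continuous_shiftC [TopologicalSpace Q] (v : ℤ × ℤ) :
    Continuous (shiftC (Q := Q) v) :=
  continuous_pi fun x => continuous_apply (x + v)

lemma shiftC_sub_eq_self {v w : ℤ × ℤ} {c : Config Q} (h : shiftC v c = shiftC w c) :
    shiftC (w - v) c = c := by
  rw [sub_eq_add_neg, ← shiftC_shiftC, ← h, shiftC_neg_shiftC]

lemma shiftC_zsmul_eq_self {v : ℤ × ℤ} {c : Config Q} (h : shiftC v c = c) (k : ℤ) :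
    shiftC (k • v) c = c := by
  induction k using Int.induction_on with
  | zero => simp
  | succ k ih => rw [add_smul, one_smul, ← shiftC_shiftC, ih, h]
  | pred k ih =>
    have hneg : shiftC (-v) c = c := by simpa [h] using shiftC_neg_shiftC v c
    rw [sub_smul, one_smul, sub_eq_add_neg, ← shiftC_shiftC, ih, hneg]

lemma patLe_shiftC (c : Config Q) (v : ℤ × ℤ) : PatLe c (shiftC v c) := by
  rintro W P ⟨t, ht⟩
  refine ⟨t - v, fun x hx => ?_⟩
  simpa only [shiftC_apply, add_assoc, sub_add_cancel] using ht x hx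

lemma mem_closure_range_shiftC_of_patLe [TopologicalSpace Q] {y c : Config Q} (h : PatLe y c) :
    y ∈ closure (range fun v => shiftC v c) := by
  rw [mem_closure_iff]
  intro W hW hyW
  obtain ⟨I, u, hu, hIW⟩ := isOpen_pi_iff.mp hW y hyW
  obtain ⟨t, ht⟩ := h I y ⟨0, fun x _ => by rw [add_zero]⟩
  refine ⟨shiftC t c, hIW fun i hi => ?_, t, rfl⟩
  rw [shiftC_apply, ht i hi]
  exact (hu i hi).2

lemma shiftInvariant_tilings (V : Finset (ℤ × ℤ)) (A : Set ({x // x ∈ V} → Q)) :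
    ShiftInvariant (Tilings V A) := by
  intro c hc v t
  simpa only [shiftC_apply, add_right_comm] using hc (t + v)

lemma isPeriodic_of_mem_finite {S : Set (Config Q)} (hS : ShiftInvariant S) (hfin : S.Finite)
    {c : Config Q} (hc : c ∈ S) : IsPeriodic c :=
  hfin.subset <| range_subset_iff.mpr fun v => hS c hc v

end Shift

section Periodic

variable {Q : Type*}

def periodicConfigs (q : ℤ) : Set (Config Q) :=
  {c | shiftC (q, 0) c = c ∧ shiftC (0, q) c = c}

/-- A clopen condition: the shift-invariant sets inside it consist of `q`-periodic
configurations. -/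
def periodicAtOrigin (q : ℤ) : Set (Config Q) :=
  {d | d (q, 0) = d 0 ∧ d (0, q) = d 0}

lemma apply_eq_apply_emod {q : ℤ} {c : Config Q} (hc : c ∈ periodicConfigs q) (a b : ℤ) :
    c (a, b) = c (a % q, b % q) := by
  calc c (a, b)
      = shiftC ((b / q) • ((0, q) : ℤ × ℤ)) (shiftC ((a / q) • ((q, 0) : ℤ × ℤ)) c)
          (a % q, b % q) := by
        simp only [shiftC_apply, Prod.smul_mk, smul_eq_mul, mul_zero, Prod.mk_add_mk, add_zero,
          mul_comm _ q, Int.emod_add_mul_ediv]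
    _ = c (a % q, b % q) := by
        rw [shiftC_zsmul_eq_self hc.1, shiftC_zsmul_eq_self hc.2]

lemma finite_periodicConfigs [Finite Q] {q : ℤ} (hq : 0 < q) :
    (periodicConfigs q : Set (Config Q)).Finite := by
  set B : Set (ℤ × ℤ) := Ico 0 q ×ˢ Ico 0 q
  have : Finite B := ((finite_Ico 0 q).prod (finite_Ico 0 q)).to_subtype
  refine Finite.of_finite_image (f := B.domRestrict) (toFinite _) fun c hc d hd hcd => ?_
  ext ⟨a, b⟩
  have hmem : ((a % q, b % q) : ℤ × ℤ) ∈ B :=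
    ⟨⟨Int.emod_nonneg a hq.ne', Int.emod_lt_of_pos a hq⟩,
      ⟨Int.emod_nonneg b hq.ne', Int.emod_lt_of_pos b hq⟩⟩
  rw [apply_eq_apply_emod hc, apply_eq_apply_emod hd]
  exact congrFun hcd ⟨_, hmem⟩

lemma periodicConfigs_subset_periodicAtOrigin (q : ℤ) :
    (periodicConfigs q : Set (Config Q)) ⊆ periodicAtOrigin q := fun _ hc =>
  ⟨by simpa using congrFun hc.1 0, by simpa using congrFun hc.2 0⟩

lemma mem_periodicConfigs_of_forall_shiftC_mem {q : ℤ} {c : Config Q}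
    (h : ∀ t, shiftC t c ∈ periodicAtOrigin q) : c ∈ periodicConfigs q := by
  constructor <;> ext x
  · simpa [add_comm] using (h x).1
  · simpa [add_comm] using (h x).2

lemma isOpen_periodicAtOrigin [TopologicalSpace Q] [DiscreteTopology Q] (q : ℤ) :
    IsOpen (periodicAtOrigin q : Set (Config Q)) := by
  have hcont : Continuous fun d : Config Q => (d (q, 0), d (0, q), d 0) := by fun_prop
  exact hcont.isOpen_preimage {y | y.1 = y.2.2 ∧ y.2.1 = y.2.2} (isOpen_discrete _)

/-- The pigeonhole principle applied to the shifts `(n, 0)` and `(0, n)`, `n : ℕ`, acting on `S`. -/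
lemma exists_subset_periodicConfigs {S : Set (Config Q)} (hS : ShiftInvariant S)
    (hfin : S.Finite) : ∃ q > 0, S ⊆ periodicConfigs q := by
  have : Finite S := hfin.to_subtype
  set f : ℕ → S → Config Q × Config Q :=
    fun n c => (shiftC ((n : ℤ), 0) c, shiftC (0, (n : ℤ)) c)
  have hf : ∀ n, f n ∈ pi univ fun _ => S ×ˢ S :=
    fun n c _ => ⟨hS c c.2 _, hS c c.2 _⟩
  obtain ⟨m, n, hmn, hfmn⟩ := (Finite.pi fun _ => hfin.prod hfin).exists_lt_map_eq_of_forall_mem hf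
  refine ⟨n - m, by omega, fun c hc => ?_⟩
  obtain ⟨h₁, h₂⟩ := Prod.ext_iff.mp (congrFun hfmn ⟨c, hc⟩)
  constructor
  · simpa using shiftC_sub_eq_self h₁
  · simpa using shiftC_sub_eq_self h₂

end Periodic

section DerivedSet

variable {Q : Type*} [TopologicalSpace Q]

open Filter

lemma isolatedIn_iff_not_accPt {S : Set (Config Q)} {c : Config Q} (hc : c ∈ S) :
    IsolatedIn S c ↔ ¬ AccPt c (𝓟 S) := by
  rw [accPt_iff_nhds]
  push Not
  constructor
  · rintro ⟨U, hU, hUS⟩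
    have hcU : c ∈ U := (hUS.symm ▸ mem_singleton c : c ∈ U ∩ S).1
    exact ⟨U, hU.mem_nhds hcU, fun y hy => mem_singleton_iff.mp (hUS ▸ hy)⟩
  · rintro ⟨U, hU, hUS⟩
    obtain ⟨W, hWU, hW, hcW⟩ := mem_nhds_iff.mp hU
    exact ⟨W, hW, Subset.antisymm (fun y hy => hUS y ⟨hWU hy.1, hy.2⟩)
      (singleton_subset_iff.mpr ⟨hcW, hc⟩)⟩

lemma derivSet_eq (S : Set (Config Q)) : derivSet S = S ∩ derivedSet S := by
  ext c
  simp only [derivSet, mem_sep_iff, mem_inter_iff, mem_derivedSet]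
  exact and_congr_right fun hc => (isolatedIn_iff_not_accPt hc).not_left

lemma isClosed_derivSet [T1Space Q] {S : Set (Config Q)} (hS : IsClosed S) :
    IsClosed (derivSet S) := by
  rw [derivSet_eq]
  exact hS.inter (isClosed_derivedSet S)

lemma shiftInvariant_derivSet {S : Set (Config Q)} (hS : ShiftInvariant S) :
    ShiftInvariant (derivSet S) := by
  rw [derivSet_eq]
  rintro c ⟨hcS, hc⟩ v
  refine ⟨hS c hcS v, derivedSet_mono _ _ ?_
    ((continuous_shiftC v).image_derivedSet (shiftC_injective v) ⟨c, hc, rfl⟩)⟩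
  rintro _ ⟨d, hd, rfl⟩
  exact hS d hd v

/-- The Baire category theorem in the compact Hausdorff space `S`, covered by its points. -/
lemma IsCompact.exists_isolatedIn_of_countable [T2Space Q] {S : Set (Config Q)}
    (hS : IsCompact S) (hct : S.Countable) (hne : S.Nonempty) : ∃ c ∈ S, IsolatedIn S c := by
  have : Countable S := hct.to_subtype
  have : Nonempty S := hne.to_subtype
  have : CompactSpace S := isCompact_iff_compactSpace.mp hS
  obtain ⟨i, hi⟩ := nonempty_interior_of_iUnion_of_closed (f := fun i : S => {i})
    (fun _ => isClosed_singleton) (iUnion_of_singleton S)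
  have hopen : IsOpen ({i} : Set S) := by
    obtain ⟨j, hj⟩ := hi
    rw [mem_singleton_iff.mp (interior_subset hj)] at hj
    simpa [subset_antisymm interior_subset (singleton_subset_iff.mpr hj)] using
      isOpen_interior (s := ({i} : Set S))
  obtain ⟨U, hU, hUi⟩ := isOpen_induced_iff.mp hopen
  refine ⟨i, i.2, U, hU, ?_⟩
  refine Subset.antisymm (fun y ⟨hyU, hyS⟩ => ?_) (singleton_subset_iff.mpr ⟨?_, i.2⟩)
  · exact congrArg Subtype.val (hUi.subset (show (⟨y, hyS⟩ : S) ∈ Subtype.val ⁻¹' U from hyU))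
  · exact hUi.symm.subset (mem_singleton i)

end DerivedSet

section Subshift

variable {Q : Type*} [TopologicalSpace Q]

structure IsInfiniteSubshift (S : Set (Config Q)) : Prop where
  isClosed : IsClosed S
  shiftInvariant : ShiftInvariant S
  infinite : S.Infinite

lemma isClosed_tilings [DiscreteTopology Q] (V : Finset (ℤ × ℤ)) (A : Set ({x // x ∈ V} → Q)) :
    IsClosed (Tilings V A) := by
  have hT : Tilings V A = ⋂ t : ℤ × ℤ, (fun c : Config Q => fun y : V => c (t + y.1)) ⁻¹' A := by
    ext c
    simp [Tilings, IsTiling]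
  rw [hT]
  exact isClosed_iInter fun t => (isClosed_discrete A).preimage (by fun_prop)

lemma mem_derivSet_of_patLe {G : Set (Config Q)} (hG : IsClosed G) (hGinv : ShiftInvariant G)
    {c y : Config Q} (hc : c ∈ G) (hyc : PatLe y c) (hcy : ¬ PatLe c y) : y ∈ derivSet G := by
  have horbit : (range fun v => shiftC v c) ⊆ G := range_subset_iff.mpr (hGinv c hc)
  have hy := mem_closure_range_shiftC_of_patLe hyc
  refine ⟨hG.closure_subset_iff.mpr horbit hy, fun ⟨U, hU, hUG⟩ => hcy ?_⟩
  have hyU : y ∈ U := (hUG.symm ▸ mem_singleton y : y ∈ U ∩ G).1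
  obtain ⟨_, hzU, v, rfl⟩ := mem_closure_iff.mp hy U hU hyU
  rw [← mem_singleton_iff.mp (hUG ▸ ⟨hzU, horbit ⟨v, rfl⟩⟩ : shiftC v c ∈ ({y} : Set _))]
  exact patLe_shiftC c v

variable [Finite Q] [DiscreteTopology Q]

/-- If the intersection were finite, its points would share a period `q`; by compactness some
member of the chain would then lie in the open set `periodicAtOrigin q`, hence consist of
`q`-periodic configurations. -/
lemma isInfiniteSubshift_sInter {𝒞 : Set (Set (Config Q))}
    (h𝒞 : ∀ S ∈ 𝒞, IsInfiniteSubshift S) (hchain : IsChain (· ⊆ ·) 𝒞) (hne : 𝒞.Nonempty) :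
    IsInfiniteSubshift (⋂₀ 𝒞) := by
  have hinv : ShiftInvariant (⋂₀ 𝒞) := fun c hc v S hS => (h𝒞 S hS).shiftInvariant c (hc S hS) v
  refine ⟨isClosed_sInter fun S hS => (h𝒞 S hS).isClosed, hinv, fun hfin => ?_⟩
  obtain ⟨q, hq, hsub⟩ := exists_subset_periodicConfigs hinv hfin
  have : Nonempty 𝒞 := hne.to_subtype
  obtain ⟨⟨S, hS⟩, hSU⟩ := exists_subset_nhds_of_isCompact (V := fun S : 𝒞 => S.1)
    (fun S T => (hchain.total S.2 T.2).elim (fun h => ⟨S, subset_rfl, h⟩)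
      fun h => ⟨T, h, subset_rfl⟩) (fun S => (h𝒞 S S.2).isClosed.isCompact)
    (U := periodicAtOrigin q) fun c hc =>
      (isOpen_periodicAtOrigin q).mem_nhds <| periodicConfigs_subset_periodicAtOrigin q <|
        hsub (by simpa [sInter_eq_iInter] using hc)
  refine (h𝒞 S hS).infinite ((finite_periodicConfigs hq).subset fun c hc => ?_)
  exact mem_periodicConfigs_of_forall_shiftC_mem fun t => hSU ((h𝒞 S hS).shiftInvariant c hc t)

lemma exists_minimal_isInfiniteSubshift {T : Set (Config Q)} (hT : IsInfiniteSubshift T) :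
    ∃ G ⊆ T, Minimal IsInfiniteSubshift G :=
  zorn_superset_nonempty {S | IsInfiniteSubshift S}
    (fun _ h𝒞 hchain hne => ⟨_, isInfiniteSubshift_sInter h𝒞 hchain hne,
      fun _ hS => sInter_subset_of_mem hS⟩) T hT

lemma finite_derivSet_of_minimal {G : Set (Config Q)} (hG : Minimal IsInfiniteSubshift G)
    (hct : G.Countable) : (derivSet G).Finite := by
  by_contra hinf
  have hGF : G ⊆ derivSet G := hG.2
    ⟨isClosed_derivSet hG.1.isClosed, shiftInvariant_derivSet hG.1.shiftInvariant, hinf⟩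
    (sep_subset _ _)
  obtain ⟨c, hc, hiso⟩ :=
    hG.1.isClosed.isCompact.exists_isolatedIn_of_countable hct hG.1.infinite.nonempty
  exact (hGF hc).2 hiso

lemma IsInfiniteSubshift.exists_not_isPeriodic {G : Set (Config Q)} (hG : IsInfiniteSubshift G)
    (hF : (derivSet G).Finite) : ∃ c ∈ G, ¬ IsPeriodic c := by
  by_contra! hper
  obtain ⟨q, hq, hFq⟩ := exists_subset_periodicConfigs (shiftInvariant_derivSet hG.shiftInvariant) hF
  set K := G \ periodicAtOrigin q
  have hK : K.Finite := by
    by_contra hK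
    obtain ⟨c, hcK, hacc⟩ := Infinite.exists_accPt_of_subset_isCompact hK
      (hG.isClosed.sdiff (isOpen_periodicAtOrigin q)).isCompact Subset.rfl
    have hcF : c ∈ derivSet G := by
      rw [derivSet_eq]
      exact ⟨hcK.1, hacc.mono (Filter.principal_mono.mpr sdiff_subset)⟩
    exact hcK.2 (periodicConfigs_subset_periodicAtOrigin q (hFq hcF))
  have hcover : G ⊆ periodicConfigs q ∪ ⋃ e ∈ K, range fun v => shiftC v e := by
    intro d hd
    by_cases h : ∀ t, shiftC t d ∈ periodicAtOrigin q
    · exact Or.inl (mem_periodicConfigs_of_forall_shiftC_mem h)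
    · push Not at h
      obtain ⟨t, ht⟩ := h
      exact Or.inr (mem_biUnion ⟨hG.shiftInvariant d hd t, ht⟩ ⟨-t, shiftC_neg_shiftC t d⟩)
  exact hG.infinite <| ((finite_periodicConfigs hq).union
    (hK.biUnion fun e he => hper e he.1)).subset hcover

end Subshift

theorem stmt18_general {Q : Type*} [Fintype Q] [TopologicalSpace Q] [DiscreteTopology Q]
    (V : Finset (ℤ × ℤ)) (A : Set ({x // x ∈ V} → Q))
    (hcount : (Tilings V A : Set (Config Q)).Countable)
    (hinf : (Tilings V A : Set (Config Q)).Infinite) :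
    ∃ c ∈ (Tilings V A : Set (Config Q)), ¬ IsPeriodic c ∧
      ∀ y : Config Q, PatLe y c → ¬ PatLe c y → IsPeriodic y := by
  obtain ⟨G, hGT, hG⟩ := exists_minimal_isInfiniteSubshift
    ⟨isClosed_tilings V A, shiftInvariant_tilings V A, hinf⟩
  have hF : (derivSet G).Finite := finite_derivSet_of_minimal hG (hcount.mono hGT)
  obtain ⟨c, hcG, hc⟩ := hG.1.exists_not_isPeriodic hF
  refine ⟨c, hGT hcG, hc, fun y hyc hcy => ?_⟩
  exact isPeriodic_of_mem_finite (shiftInvariant_derivSet hG.1.shiftInvariant) hF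
    (mem_derivSet_of_patLe hG.1.isClosed hG.1.shiftInvariant hcG hyc hcy)

/-- A tile-set with countably infinitely many tilings has a
tiling at level 1: not periodic, but everything strictly below it is periodic. -/
theorem stmt18 {Q : Type*} [Fintype Q] [Nonempty Q] [TopologicalSpace Q] [DiscreteTopology Q]
    (V : Finset (ℤ × ℤ)) (A : Set ({x // x ∈ V} → Q))
    (hcount : (Tilings V A : Set (Config Q)).Countable)
    (hinf : (Tilings V A : Set (Config Q)).Infinite) :
    ∃ c ∈ (Tilings V A : Set (Config Q)), ¬ IsPeriodic c ∧
      ∀ y : Config Q, PatLe y c → ¬ PatLe c y → IsPeriodic y :=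
  stmt18_general V A hcount hinf
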